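/- arXiv:1512.07269 — 5 statements merged into one kernel-verified Lean document; each statement's English description precedes it below -/
import Mathlib

section
/- For any natural numbers a, b and j ≥ 1, if sldeg(x^a y^b) ≤ j and a ≤ j and b ≤ j, then either a + b ≤ j, or (a,b) = (1,j), or (a,b) = (j,1). -/
/-- Superlinear degree of the monomial `x^a y^b`. -/
def sldeg (a b : ℕ) : ℕ := (if a ≠ 1 then a else 0) + (if b ≠ 1 then b else 0)

theorem sldeg_characterization (a b j : ℕ) (hj : 1 ≤ j)
    (h : sldeg a b ≤ j) (ha : a ≤ j) (hb : b ≤ j) :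
    a + b ≤ j ∨ (a = 1 ∧ b = j) ∨ (a = j ∧ b = 1) := by
  unfold sldeg at h
  by_cases h1 : a = 1 <;> by_cases h2 : b = 1 <;> simp [h1, h2] at h <;> omega
end

section
/- For every polynomial p ∈ ℝ[ξ,η,ζ] of total degree at most r, the pullback φ*p, defined by (φ*p)(x,y,z) = p(x/(1+z), y/(1+z), z/(1+z)), lies in the span of the functions x^a y^b/(1+z)^c with 0 ≤ a,b ≤ c ≤ r and a+b ≤ c, as functions on {(x,y,z) : z > -1}. -/
open MvPolynomial

/-- The domain `{(x,y,z) : z > -1}`. -/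
def D : Type := {p : ℝ × ℝ × ℝ // p.2.2 > -1}

/-- The spanning rational functions `x^a y^b / (1+z)^c`. -/
noncomputable def fmon (a b c : ℕ) : D → ℝ :=
  fun p => p.1.1^a * p.1.2.1^b / (1 + p.1.2.2)^c

/-- The pullback of a polynomial by `φ(x,y,z) = (x/(1+z), y/(1+z), z/(1+z))`. -/
noncomputable def pullback (p : MvPolynomial (Fin 3) ℝ) : D → ℝ :=
  fun q => eval ![q.1.1/(1+q.1.2.2), q.1.2.1/(1+q.1.2.2), q.1.2.2/(1+q.1.2.2)] p

lemma D_pos (q : D) : (0:ℝ) < 1 + q.1.2.2 := by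
  have := q.2
  linarith

lemma aux_mem (r a b : ℕ) : ∀ k m : ℕ, a + b + k + m ≤ r →
    (fun q : D => q.1.1^a * q.1.2.1^b * q.1.2.2^k / (1 + q.1.2.2)^(a+b+k+m)) ∈
      Submodule.span ℝ
      {f : D → ℝ | ∃ a b c : ℕ, a ≤ c ∧ b ≤ c ∧ c ≤ r ∧ a + b ≤ c ∧ f = fmon a b c} := by
  intro k
  induction k with
  | zero =>
    intro m h
    apply Submodule.subset_span
    refine ⟨a, b, a + b + m, by omega, by omega, by omega, by omega, ?_⟩
    funext q
    simp [fmon]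
  | succ k ih =>
    intro m h
    have h1 := ih m (by omega)
    have h2 := ih (m+1) (by omega)
    have key : (fun q : D => q.1.1^a * q.1.2.1^b * q.1.2.2^(k+1) / (1 + q.1.2.2)^(a+b+(k+1)+m))
        = (fun q : D => q.1.1^a * q.1.2.1^b * q.1.2.2^k / (1 + q.1.2.2)^(a+b+k+m))
        - (fun q : D => q.1.1^a * q.1.2.1^b * q.1.2.2^k / (1 + q.1.2.2)^(a+b+k+(m+1))) := by
      funext q
      have hz : (1 + q.1.2.2 : ℝ) ≠ 0 := ne_of_gt (D_pos q)
      have e1 : a+b+(k+1)+m = a+b+k+m+1 := by omega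
      have e2 : a+b+k+(m+1) = a+b+k+m+1 := by omega
      rw [e1, e2]
      simp only [Pi.sub_apply]
      field_simp
      ring
    rw [key]
    exact Submodule.sub_mem _ h1 h2

theorem polynomial_reproduction_Q (r : ℕ) (p : MvPolynomial (Fin 3) ℝ)
    (hp : p.totalDegree ≤ r) :
    pullback p ∈ Submodule.span ℝ
      {f : D → ℝ | ∃ a b c : ℕ, a ≤ c ∧ b ≤ c ∧ c ≤ r ∧ a + b ≤ c ∧ f = fmon a b c} := by
  have hdecomp : pullback p = ∑ d ∈ p.support, (p.coeff d) •
      (fun q : D => q.1.1^(d 0) * q.1.2.1^(d 1) * q.1.2.2^(d 2)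
        / (1 + q.1.2.2)^(d 0 + d 1 + d 2 + 0)) := by
    funext q
    have hz : (1 + q.1.2.2 : ℝ) ≠ 0 := ne_of_gt (D_pos q)
    simp only [pullback, Finset.sum_apply, Pi.smul_apply, smul_eq_mul]
    rw [eval_eq']
    apply Finset.sum_congr rfl
    intro d _
    rw [Fin.prod_univ_three]
    simp only [Matrix.cons_val_zero, Matrix.cons_val_one, Matrix.head_cons,
      Matrix.cons_val_two, Matrix.tail_cons]
    rw [div_pow, div_pow, div_pow, add_zero, div_mul_div_comm, div_mul_div_comm,
      ← pow_add, ← pow_add]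
  rw [hdecomp]
  apply Submodule.sum_mem
  intro d hd
  apply Submodule.smul_mem
  apply aux_mem
  have hle : d 0 + d 1 + d 2 ≤ p.totalDegree := by
    have := MvPolynomial.le_totalDegree hd
    rwa [show (d.sum fun _ e => e) = d 0 + d 1 + d 2 by
      rw [Finsupp.sum_fintype _ _ (fun _ => rfl), Fin.sum_univ_three]] at this
  omega
end

section
/- For every polynomial p ∈ ℝ[ξ,η,ζ] of total degree at most r, the pullback φ*p lies in the span of the functions x^a y^b/(1+z)^c with 0 ≤ a,b ≤ c ≤ r and sldeg(x^a y^b) ≤ c, as functions on {z > -1}. -/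
open MvPolynomial

lemma sldeg_le (a b : ℕ) : sldeg a b ≤ a + b := by
  unfold sldeg; split_ifs <;> omega

lemma key (r a b e : ℕ) (h : a + b + e ≤ r) :
    (fun q : D => q.1.1^a * q.1.2.1^b * q.1.2.2^e / (1+q.1.2.2)^(a+b+e)) ∈
      Submodule.span ℝ {f : D → ℝ | ∃ a b c : ℕ, a ≤ c ∧ b ≤ c ∧ c ≤ r ∧ sldeg a b ≤ c ∧ f = fmon a b c} := by
  have heq : (fun q : D => q.1.1^a * q.1.2.1^b * q.1.2.2^e / (1+q.1.2.2)^(a+b+e))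
      = ∑ k ∈ Finset.range (e+1), ((-1:ℝ)^(e-k) * (e.choose k : ℝ)) • fmon a b (a+b+e-k) := by
    funext q
    rw [Finset.sum_apply]
    obtain ⟨⟨x, y, z⟩, hz⟩ := q
    have hz' : z > -1 := hz
    have hz1 : (1:ℝ)+z ≠ 0 := by linarith
    simp only [Finset.sum_apply, Pi.smul_apply, fmon, smul_eq_mul]
    have hze : z^e = ∑ k ∈ Finset.range (e+1), (1+z)^k * (-1)^(e-k) * (e.choose k : ℝ) := by
      rw [← add_pow]; ring_nf
    calc x^a * y^b * z^e / (1+z)^(a+b+e)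
        = ∑ k ∈ Finset.range (e+1),
            x^a * y^b * ((1+z)^k * (-1)^(e-k) * (e.choose k : ℝ)) / (1+z)^(a+b+e) := by
          rw [hze, Finset.mul_sum, Finset.sum_div]
      _ = ∑ k ∈ Finset.range (e+1),
            (-1:ℝ)^(e-k) * (e.choose k : ℝ) * (x^a * y^b / (1+z)^(a+b+e-k)) := by
          apply Finset.sum_congr rfl
          intro k hk
          rw [Finset.mem_range] at hk
          rw [show a+b+e = (a+b+e-k)+k by omega, pow_add]
          field_simp
          ring_nf
          simp only [Nat.add_sub_cancel]
  rw [heq]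
  apply Submodule.sum_mem
  intro k hk
  rw [Finset.mem_range] at hk
  apply Submodule.smul_mem
  apply Submodule.subset_span
  exact ⟨a, b, a+b+e-k, by omega, by omega, by omega,
    le_trans (sldeg_le a b) (by omega), rfl⟩

theorem polynomial_reproduction_S (r : ℕ) (p : MvPolynomial (Fin 3) ℝ)
    (hp : p.totalDegree ≤ r) :
    pullback p ∈ Submodule.span ℝ
      {f : D → ℝ | ∃ a b c : ℕ, a ≤ c ∧ b ≤ c ∧ c ≤ r ∧ sldeg a b ≤ c ∧ f = fmon a b c} := by
  have hps : pullback p = ∑ d ∈ p.support, pullback (monomial d (coeff d p)) := by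
    funext q
    simp only [pullback, Finset.sum_apply]
    conv_lhs => rw [p.as_sum]
    rw [map_sum]
  rw [hps]
  apply Submodule.sum_mem
  intro d hd
  have hdeg : d 0 + d 1 + d 2 ≤ r := by
    have h1 := MvPolynomial.le_totalDegree hd
    have h2 : d.sum (fun _ e => e) = d 0 + d 1 + d 2 := by
      rw [Finsupp.sum_fintype _ _ (fun _ => rfl), Fin.sum_univ_three]
    omega
  have hm : pullback (monomial d (coeff d p)) = (coeff d p) •
      (fun q : D => q.1.1^(d 0) * q.1.2.1^(d 1) * q.1.2.2^(d 2) / (1+q.1.2.2)^(d 0 + d 1 + d 2)) := by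
    funext q
    rw [Pi.smul_apply]
    obtain ⟨⟨x, y, z⟩, hz⟩ := q
    have hz' : z > -1 := hz
    have hz1 : (1:ℝ)+z ≠ 0 := by linarith
    simp only [pullback, eval_monomial, Pi.smul_apply, smul_eq_mul]
    rw [Finsupp.prod_fintype _ _ (fun _ => pow_zero _), Fin.prod_univ_three]
    simp only [Matrix.cons_val_zero, Matrix.cons_val_one, Matrix.head_cons,
      Matrix.cons_val_two, Matrix.tail_cons]
    rw [div_pow, div_pow, div_pow, pow_add, pow_add]
    field_simp
  rw [hm]
  exact Submodule.smul_mem _ _ (key r _ _ _ hdeg)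
end

section
/- For every r ≥ 1, the trace on the face {ζ = 0} of any function in span{ξ^a η^b (1-ζ)^{c-a-b} : 0 ≤ a,b ≤ c ≤ r, sldeg(ξ^a η^b) ≤ c} lies in the two-dimensional serendipity space span{ξ^a η^b : sldeg(ξ^a η^b) ≤ r}, and conversely every element of that serendipity space arises as such a trace. -/
/-- Shape functions of `Y_r Λ^0` on the reference pyramid (in coordinates `(ξ,η,ζ)`). -/
noncomputable def shapeS (r : ℕ) : Submodule ℝ ((ℝ × ℝ × ℝ) → ℝ) :=
  Submodule.span ℝ
    {f | ∃ a b c : ℕ, a ≤ c ∧ b ≤ c ∧ c ≤ r ∧ sldeg a b ≤ c ∧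
      f = fun p : ℝ × ℝ × ℝ => p.1^a * p.2.1^b * (1 - p.2.2)^(c - a - b)}

/-- The two-dimensional serendipity space of order `r` (as functions of `(ξ,η)`). -/
noncomputable def serendipity (r : ℕ) : Submodule ℝ ((ℝ × ℝ) → ℝ) :=
  Submodule.span ℝ
    {g | ∃ a b : ℕ, sldeg a b ≤ r ∧ g = fun q : ℝ × ℝ => q.1^a * q.2^b}

theorem trace_base_serendipity (r : ℕ) (hr : 1 ≤ r) :
    (∀ u ∈ shapeS r, (fun q : ℝ × ℝ => u (q.1, q.2, 0)) ∈ serendipity r) ∧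
    (∀ g ∈ serendipity r, ∃ u ∈ shapeS r, g = fun q : ℝ × ℝ => u (q.1, q.2, 0)) := by
  constructor
  · intro u hu
    induction hu using Submodule.span_induction with
    | mem f hf =>
      obtain ⟨a, b, c, hac, hbc, hcr, hs, rfl⟩ := hf
      have he : (fun q : ℝ × ℝ => (q.1, q.2, (0:ℝ)).1 ^ a * (q.1, q.2, (0:ℝ)).2.1 ^ b *
          (1 - (q.1, q.2, (0:ℝ)).2.2) ^ (c - a - b)) = fun q : ℝ × ℝ => q.1 ^ a * q.2 ^ b := by
        funext q; simp
      rw [he]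
      exact Submodule.subset_span ⟨a, b, le_trans hs hcr, rfl⟩
    | zero =>
      exact (serendipity r).zero_mem
    | add x y _ _ hx hy => exact Submodule.add_mem _ hx hy
    | smul a x _ hx => exact Submodule.smul_mem _ a hx
  · intro g hg
    induction hg using Submodule.span_induction with
    | mem f hf =>
      obtain ⟨a, b, hs, rfl⟩ := hf
      refine ⟨fun p : ℝ × ℝ × ℝ => p.1 ^ a * p.2.1 ^ b * (1 - p.2.2) ^ (r - a - b),
        Submodule.subset_span ⟨a, b, r, ?_, ?_, le_rfl, hs, rfl⟩, ?_⟩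
      · simp only [sldeg] at hs; split_ifs at hs <;> omega
      · simp only [sldeg] at hs; split_ifs at hs <;> omega
      · funext q; simp
    | zero => exact ⟨0, (shapeS r).zero_mem, rfl⟩
    | add x y _ _ hx hy =>
      obtain ⟨u, hu, rfl⟩ := hx
      obtain ⟨v, hv, rfl⟩ := hy
      exact ⟨u + v, (shapeS r).add_mem hu hv, rfl⟩
    | smul a x _ hx =>
      obtain ⟨u, hu, rfl⟩ := hx
      exact ⟨a • u, (shapeS r).smul_mem a hu, rfl⟩
end

section
/- For every r ≥ 0, the trace on the triangular face {ξ = 0} of K̂ of any function in span{ξ^a η^b (1-ζ)^{c-a-b} : 0 ≤ a,b ≤ c ≤ r} lies in the space of bivariate polynomials in (η,ζ) of total degree at most r, and conversely every polynomial in (η,ζ) of total degree at most r on the triangle arises as such a trace. -/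
open MvPolynomial

/-- Shape functions of `Y_r^- Λ^0` on the reference pyramid (in coordinates `(ξ,η,ζ)`). -/
noncomputable def shapeQ (r : ℕ) : Submodule ℝ ((ℝ × ℝ × ℝ) → ℝ) :=
  Submodule.span ℝ
    {f | ∃ a b c : ℕ, a ≤ c ∧ b ≤ c ∧ c ≤ r ∧
      f = fun p : ℝ × ℝ × ℝ => p.1^a * p.2.1^b * (1 - p.2.2)^(c - a - b)}

/-- The triangular face `{ξ = 0}` of the reference pyramid, as a subset of the
`(η,ζ)`-plane. -/
def Tri : Set (ℝ × ℝ) := {q | 0 ≤ q.1 ∧ 0 ≤ q.2 ∧ q.1 + q.2 ≤ 1}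

lemma monomial_mem_shapeQ (r b d : ℕ) (hbd : b + d ≤ r) :
    (fun p : ℝ × ℝ × ℝ => p.2.1 ^ b * p.2.2 ^ d) ∈ shapeQ r := by
  have key : (fun p : ℝ × ℝ × ℝ => p.2.1 ^ b * p.2.2 ^ d)
      = ∑ k ∈ Finset.range (d + 1),
        (((-1 : ℝ) ^ (d - k) * (d.choose k : ℝ)) •
          fun p : ℝ × ℝ × ℝ => p.2.1 ^ b * (1 - p.2.2) ^ (d - k)) := by
    funext p
    have hx : p.2.2 = 1 + -(1 - p.2.2) := by ring
    have := add_pow (1 : ℝ) (-(1 - p.2.2)) d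
    calc p.2.1 ^ b * p.2.2 ^ d
        = p.2.1 ^ b * (1 + -(1 - p.2.2)) ^ d := by rw [← hx]
      _ = _ := by
          rw [this, Finset.mul_sum, Finset.sum_apply]
          refine Finset.sum_congr rfl fun k hk => ?_
          simp only [Pi.smul_apply, smul_eq_mul, one_pow]
          rw [neg_pow]
          ring
  rw [key]
  refine Submodule.sum_mem _ fun k hk => Submodule.smul_mem _ _ (Submodule.subset_span ?_)
  refine ⟨0, b, b + (d - k), Nat.zero_le _, Nat.le_add_right _ _, ?_, ?_⟩
  · have : d - k ≤ d := Nat.sub_le _ _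
    omega
  · funext p
    simp

theorem trace_triangular_face (r : ℕ) :
    (∀ u ∈ shapeQ r, ∃ p : MvPolynomial (Fin 2) ℝ, p.totalDegree ≤ r ∧
      ∀ η ζ : ℝ, u (0, η, ζ) = eval ![η, ζ] p) ∧
    (∀ p : MvPolynomial (Fin 2) ℝ, p.totalDegree ≤ r →
      ∃ u ∈ shapeQ r, ∀ q ∈ Tri, u (0, q.1, q.2) = eval ![q.1, q.2] p) := by
  constructor
  · intro u hu
    induction hu using Submodule.span_induction with
    | mem f hf =>
        obtain ⟨a, b, c, hac, hbc, hcr, rfl⟩ := hf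
        rcases a with _ | a
        · refine ⟨(X 0) ^ b * (1 - X 1) ^ (c - 0 - b), ?_, ?_⟩
          · refine le_trans (totalDegree_mul _ _) ?_
            have h1 : ((X 0 : MvPolynomial (Fin 2) ℝ) ^ b).totalDegree ≤ b := by
              refine le_trans (totalDegree_pow _ _) ?_
              simp [totalDegree_X]
            have h2 : ((1 - X 1 : MvPolynomial (Fin 2) ℝ) ^ (c - 0 - b)).totalDegree
                ≤ c - 0 - b := by
              refine le_trans (totalDegree_pow _ _) ?_
              have : (1 - X 1 : MvPolynomial (Fin 2) ℝ).totalDegree ≤ 1 := by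
                refine le_trans (totalDegree_sub _ _) ?_
                simp [totalDegree_X]
              calc (c - 0 - b) * (1 - X 1 : MvPolynomial (Fin 2) ℝ).totalDegree
                  ≤ (c - 0 - b) * 1 := Nat.mul_le_mul_left _ this
                _ = c - 0 - b := Nat.mul_one _
            omega
          · intro η ζ
            simp
        · exact ⟨0, by simp, fun η ζ => by simp [zero_pow]⟩
    | zero => exact ⟨0, by simp, fun η ζ => by simp⟩
    | add x y hx hy ihx ihy =>
        obtain ⟨p, hp, hpe⟩ := ihx
        obtain ⟨q, hq, hqe⟩ := ihy
        refine ⟨p + q, le_trans (totalDegree_add _ _) (max_le hp hq), fun η ζ => ?_⟩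
        simp [hpe, hqe]
    | smul c x hx ihx =>
        obtain ⟨p, hp, hpe⟩ := ihx
        refine ⟨C c * p, ?_, fun η ζ => ?_⟩
        · refine le_trans (totalDegree_mul _ _) ?_
          simp [totalDegree_C, hp]
        · simp [hpe]
  · intro p hp
    refine ⟨fun q : ℝ × ℝ × ℝ => eval ![q.2.1, q.2.2] p, ?_, fun q _ => rfl⟩
    have : (fun q : ℝ × ℝ × ℝ => eval ![q.2.1, q.2.2] p)
        = ∑ m ∈ p.support, (p.coeff m) •
            fun q : ℝ × ℝ × ℝ => q.2.1 ^ (m 0) * q.2.2 ^ (m 1) := by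
      funext q
      rw [eval_eq', Finset.sum_apply]
      refine Finset.sum_congr rfl fun m hm => ?_
      simp [Fin.prod_univ_two]
    rw [this]
    refine Submodule.sum_mem _ fun m hm => Submodule.smul_mem _ _ ?_
    refine monomial_mem_shapeQ r (m 0) (m 1) ?_
    have h1 := le_totalDegree hm
    have h2 : (m.sum fun _ e => e) = m 0 + m 1 := by
      rw [Finsupp.sum_fintype _ _ (fun _ => rfl), Fin.sum_univ_two]
    omega
end
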